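/- arXiv:2208.13062 — 6 statements merged into one kernel-verified Lean document; each statement's English description precedes it below -/
import Mathlib

section
/- Let R be an integral domain and (G,A) a connected edge-labeled graph with n vertices. For each i with 0 < i < n, the n-tuple F with F_j = 0 for j ≠ i+1 and F_{i+1} equal to the product of the edge labels of edges incident to vertex v_{i+1} is a generalized spline on (G,A). In particular, every flow-up class F_i (splines whose first i coordinates are zero and whose (i+1)st coordinate is nonzero, for 0 ≤ i < n) is non-empty. -/
/-- The module of generalized splines on an edge-labeled graph `G` on vertices `Fin n`
over a commutative ring `R`: vertex labelings `F` such that for every edge `{i,j}`,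
the edge label `lab i j` divides `F i - F j`. -/
def splineMod {R : Type*} [CommRing R] {n : ℕ} (G : SimpleGraph (Fin n))
    (lab : Fin n → Fin n → R) : Submodule R (Fin n → R) where
  carrier := {F | ∀ i j, G.Adj i j → lab i j ∣ F i - F j}
  add_mem' := by
    intro x y hx hy i j hij
    simpa [add_sub_add_comm] using dvd_add (hx i j hij) (hy i j hij)
  zero_mem' := by intro i j hij; simp
  smul_mem' := by
    intro c x hx i j hij
    simpa [Pi.smul_apply, smul_eq_mul, ← mul_sub] using (hx i j hij).mul_left c

/-- For each vertex `i`, the tuple which is zero away from `i` and equals the product of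
the labels of the edges incident to `i` at coordinate `i` is a generalized spline;
in particular every flow-up class is non-empty. -/
theorem stmt0 {R : Type*} [CommRing R] [IsDomain R] {n : ℕ}
    (G : SimpleGraph (Fin n)) [DecidableRel G.Adj] (hconn : G.Connected)
    (lab : Fin n → Fin n → R) (hsym : ∀ i j, lab i j = lab j i)
    (hlab : ∀ i j, G.Adj i j → lab i j ≠ 0) (i : Fin n) :
    ∃ F ∈ splineMod G lab,
      F i = ∏ j ∈ G.neighborFinset i, lab i j ∧
      (∀ j, j ≠ i → F j = 0) ∧ (∀ j, j < i → F j = 0) ∧ F i ≠ 0 := by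
  set P : R := ∏ j ∈ G.neighborFinset i, lab i j with hP
  refine ⟨fun j => if j = i then P else 0, ?_, by simp, fun j hj => by simp [hj], fun j hj => by simp [hj.ne], ?_⟩
  · intro a b hab
    by_cases ha : a = i
    · subst ha
      have hb : b ≠ a := (G.ne_of_adj hab).symm
      simp only [if_pos rfl, if_neg hb, sub_zero]
      exact Finset.dvd_prod_of_mem _ (by simpa using hab)
    · by_cases hb : b = i
      · subst hb
        simp only [if_neg ha, if_pos rfl, zero_sub, dvd_neg, hsym a b]
        exact Finset.dvd_prod_of_mem _ (by simpa using hab.symm)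
      · simp [ha, hb]
  · simp only [if_pos rfl]
    exact Finset.prod_ne_zero_iff.mpr fun j hj => hlab i j (by simpa using hj)
end

section
/- Let R be an integral domain, G an edge-labeled graph with n vertices, and R_G its module of generalized splines. For 0 ≤ i < n, the set L(F_i) consisting of 0 together with all leading terms LT(F) = f_{i+1} of splines F = (0,...,0,f_{i+1},...,f_n) in the flow-up class F_i is an ideal of R. -/
/-- The set consisting of `0` together with the leading terms of splines in the `i`-th
flow-up class is an ideal of `R`. -/
theorem stmt1 {R : Type*} [CommRing R] [IsDomain R] {n : ℕ}
    (G : SimpleGraph (Fin n)) (lab : Fin n → Fin n → R) (i : Fin n) :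
    ∃ I : Ideal R, (I : Set R) =
      {r | ∃ F ∈ splineMod G lab, (∀ j, j < i → F j = 0) ∧ F i = r} := by
  classical
  let T : Submodule R (Fin n → R) :=
    { carrier := {F | F ∈ splineMod G lab ∧ ∀ j, j < i → F j = 0}
      add_mem' := by
        rintro x y ⟨hx, hx0⟩ ⟨hy, hy0⟩
        exact ⟨add_mem hx hy, fun j hj => by simp [hx0 j hj, hy0 j hj]⟩
      zero_mem' := ⟨zero_mem _, fun j _ => rfl⟩
      smul_mem' := by
        rintro c x ⟨hx, hx0⟩
        exact ⟨Submodule.smul_mem _ c hx, fun j hj => by simp [hx0 j hj]⟩ }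
  refine ⟨Submodule.map (LinearMap.proj i) T, ?_⟩
  ext r
  simp only [Submodule.map_coe, Set.mem_image, SetLike.mem_coe, Set.mem_setOf_eq]
  constructor
  · rintro ⟨F, ⟨hF, h0⟩, rfl⟩
    exact ⟨F, hF, h0, rfl⟩
  · rintro ⟨F, hF, h0, rfl⟩
    exact ⟨F, ⟨hF, h0⟩, rfl⟩
end

section
/- Let R be a principal ideal domain and F a spline in the flow-up class F_i of R_G, and let B ∈ F_i be a minimal element (i.e., LT(B) generates the ideal of leading terms of F_i). Then there exists r ∈ R such that F − rB lies in a flow-up class F_k with k > i. -/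
/-- Over a PID, if `F` lies in the flow-up class `𝓕ᵢ` and `B ∈ 𝓕ᵢ` is minimal (its leading
term generates the ideal of leading terms of `𝓕ᵢ`), then there is `r ∈ R` with `F - r • B`
in a flow-up class `𝓕ₖ` with `k > i` (i.e. its first `i+1` coordinates vanish). -/
theorem stmt2 {R : Type*} [CommRing R] [IsDomain R] [IsPrincipalIdealRing R] {n : ℕ}
    (G : SimpleGraph (Fin n)) (lab : Fin n → Fin n → R) (i : Fin n)
    (F B : Fin n → R) (hF : F ∈ splineMod G lab) (hB : B ∈ splineMod G lab)
    (hFz : ∀ j, j < i → F j = 0) (hFi : F i ≠ 0)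
    (hBz : ∀ j, j < i → B j = 0) (hBi : B i ≠ 0)
    (hmin : ∀ H ∈ splineMod G lab, (∀ j, j < i → H j = 0) → B i ∣ H i) :
    ∃ r : R, ∀ j, j ≤ i → (F - r • B) j = 0 := by
  obtain ⟨r, hr⟩ := hmin F hF hFz
  refine ⟨r, fun j hj => ?_⟩
  rcases lt_or_eq_of_le hj with h | h
  · simp [hFz j h, hBz j h]
  · subst h; simp [hr, mul_comm]
end

section
/- Let R be a principal ideal domain and (G,A) an edge-labeled graph with n vertices. If B_1,...,B_n are splines with B_i ∈ F_{i-1} minimal (i.e., LT(B_i) generates the ideal of leading terms of the flow-up class F_{i-1}) for each i = 1,...,n, then {B_1,...,B_n} is a basis for the R-module R_G. In particular, R_G is a free R-module possessing a flow-up class basis. -/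
/-- Over a PID, choosing a minimal element `B i` of each flow-up class `𝓕ᵢ` yields a
flow-up class basis of the spline module; in particular `R_G` is free. -/
theorem stmt3 {R : Type*} [CommRing R] [IsDomain R] [IsPrincipalIdealRing R] {n : ℕ}
    (G : SimpleGraph (Fin n)) (lab : Fin n → Fin n → R)
    (B : Fin n → Fin n → R) (hmem : ∀ i, B i ∈ splineMod G lab)
    (hflow : ∀ i j, j < i → B i j = 0) (hlead : ∀ i, B i i ≠ 0)
    (hmin : ∀ i, ∀ F ∈ splineMod G lab, (∀ j, j < i → F j = 0) → B i i ∣ F i) :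
    (LinearIndependent R B ∧ Submodule.span R (Set.range B) = splineMod G lab) ∧
      Module.Free R ↥(splineMod G lab) := by
  classical
  -- Linear independence
  have hind : LinearIndependent R B := by
    rw [Fintype.linearIndependent_iff]
    intro c hc
    have key : ∀ t : ℕ, ∀ i : Fin n, (i : ℕ) < t → c i = 0 := by
      intro t
      induction t with
      | zero => intro i h; exact absurd h (Nat.not_lt_zero _)
      | succ t ih =>
        intro i hi
        rcases Nat.lt_succ_iff_lt_or_eq.mp hi with h | h
        · exact ih i h
        · have h0 : ∑ k, c k * B k i = 0 := by
            have := congrFun hc i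
            simpa [Finset.sum_apply] using this
          have hsum : ∑ k, c k * B k i = c i * B i i := by
            refine Finset.sum_eq_single i ?_ (by simp)
            intro k _ hk
            rcases lt_or_gt_of_ne hk with hlt | hgt
            · have : (k : ℕ) < t := by
                have := (Fin.lt_def.mp hlt); omega
              rw [ih k this, zero_mul]
            · rw [hflow k i hgt, mul_zero]
          rw [hsum] at h0
          exact (mul_eq_zero.mp h0).resolve_right (hlead i)
    intro i
    exact key n i i.isLt
  -- Spanning
  have hspan : Submodule.span R (Set.range B) = splineMod G lab := by
    apply le_antisymm
    · rw [Submodule.span_le]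
      rintro _ ⟨i, rfl⟩
      exact hmem i
    · have Q : ∀ d t : ℕ, n ≤ t + d → ∀ F ∈ splineMod G lab,
          (∀ j : Fin n, (j : ℕ) < t → F j = 0) → F ∈ Submodule.span R (Set.range B) := by
        intro d
        induction d with
        | zero =>
          intro t ht F _ hz
          have : F = 0 := funext fun j => hz j (lt_of_lt_of_le j.isLt (by omega))
          rw [this]; exact Submodule.zero_mem _
        | succ d ih =>
          intro t ht F hF hz
          by_cases htn : n ≤ t
          · have : F = 0 := funext fun j => hz j (lt_of_lt_of_le j.isLt htn)
            rw [this]; exact Submodule.zero_mem _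
          · push_neg at htn
            set i : Fin n := ⟨t, htn⟩ with hidef
            obtain ⟨c, hc⟩ := hmin i F hF (fun j hj => hz j (Fin.lt_def.mp hj))
            have hG' : F - c • B i ∈ splineMod G lab :=
              Submodule.sub_mem _ hF (Submodule.smul_mem _ c (hmem i))
            have hz' : ∀ j : Fin n, (j : ℕ) < t + 1 → (F - c • B i) j = 0 := by
              intro j hj
              rcases Nat.lt_succ_iff_lt_or_eq.mp hj with h | h
              · have hji : j < i := Fin.lt_def.mpr h
                simp [hz j h, hflow i j hji]
              · have : j = i := Fin.ext h
                subst this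
                simp [hc, mul_comm]
            have hmemspan := ih (t + 1) (by omega) (F - c • B i) hG' hz'
            have hBi : B i ∈ Submodule.span R (Set.range B) :=
              Submodule.subset_span ⟨i, rfl⟩
            have : F = (F - c • B i) + c • B i := by ring_nf
            rw [this]
            exact Submodule.add_mem _ hmemspan (Submodule.smul_mem _ c hBi)
      intro F hF
      exact Q n 0 (by omega) F hF (fun j hj => absurd hj (Nat.not_lt_zero _))
  refine ⟨⟨hind, hspan⟩, ?_⟩
  -- Freeness via a basis of the submodule
  set M := splineMod G lab with hM
  let B' : Fin n → M := fun i => ⟨B i, hmem i⟩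
  have hcomp : M.subtype ∘ B' = B := rfl
  have hB'li : LinearIndependent R B' :=
    LinearIndependent.of_comp M.subtype (by rw [hcomp]; exact hind)
  have hst : Submodule.span R (Set.range B') = ⊤ := by
    apply Submodule.map_injective_of_injective M.injective_subtype
    rw [Submodule.map_span, Submodule.map_top, Submodule.range_subtype, ← Set.range_comp,
      hcomp, hspan]
  exact Module.Free.of_basis (Module.Basis.mk hB'li (by rw [hst]))
end

section
/- Let R be a GCD domain, G an edge-labeled graph, and suppose each edge label a_k divides the difference of coordinates at its endpoints for splines. For any single edge label a, and any n splines C_1,...,C_n ∈ R_G, the element a divides det[C_1,...,C_n]. -/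
/-- In a GCD domain, each single edge label divides the determinant of the matrix whose
columns are any `n` splines. -/
theorem stmt12 {R : Type*} [CommRing R] [IsDomain R] [GCDMonoid R] {n : ℕ}
    (G : SimpleGraph (Fin n)) (lab : Fin n → Fin n → R)
    (i j : Fin n) (hij : G.Adj i j)
    (C : Fin n → Fin n → R) (hC : ∀ k, C k ∈ splineMod G lab) :
    lab i j ∣ Matrix.det (Matrix.of fun a b => C b a) := by
  classical
  set M : Matrix (Fin n) (Fin n) R := Matrix.of fun a b => C b a with hM
  have hne : i ≠ j := hij.ne
  -- row subtraction
  have hdet : M.det = (M.updateRow i (M i - M j)).det := by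
    rw [sub_eq_add_neg, Matrix.det_updateRow_add, Matrix.updateRow_eq_self]
    have : (M.updateRow i (-M j)).det = -(M.updateRow i (M j)).det := by
      simpa using Matrix.det_updateRow_smul M i (-1 : R) (M j)
    rw [this, Matrix.det_updateRow_eq_zero hne.symm]
    ring
  -- each entry of the new row i is divisible by lab i j
  have hdvd : ∀ b, lab i j ∣ M i b - M j b := fun b => (hC b) i j hij
  choose w hw using hdvd
  have hrow : (M i - M j) = lab i j • w := by
    funext b
    simpa [Pi.smul_apply, smul_eq_mul] using hw b
  rw [hdet, hrow]
  have := Matrix.det_updateRow_smul M i (lab i j) w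
  rw [this]
  exact Dvd.intro _ rfl
end

section
/- Let R be a PID and (G,A) an edge-labeled graph with n vertices, and let B = {B_1,...,B_n} be a flow-up class basis for R_G with leading terms l_1,...,l_n; set Q = l_1···l_n. Then a subset C = {C_1,...,C_n} of R_G is a basis for R_G if and only if det[C_1,...,C_n] = uQ for some unit u ∈ R. -/
lemma aux_basis_iff {R : Type*} [CommRing R] {N : Type*} [AddCommGroup N] [Module R N]
    {M : Submodule R N} {ι : Type*} (v : ι → N) (hv : ∀ k, v k ∈ M) :
    (LinearIndependent R v ∧ Submodule.span R (Set.range v) = M) ↔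
    (LinearIndependent R (fun k => (⟨v k, hv k⟩ : M)) ∧
      Submodule.span R (Set.range fun k => (⟨v k, hv k⟩ : M)) = ⊤) := by
  have hcomp : M.subtype ∘ (fun k => (⟨v k, hv k⟩ : M)) = v := rfl
  constructor
  · rintro ⟨hli, hsp⟩
    refine ⟨LinearIndependent.of_comp M.subtype (by rwa [hcomp]), ?_⟩
    apply (Submodule.map_injective_of_injective M.injective_subtype)
    rw [Submodule.map_span, ← Set.range_comp, hcomp, hsp, Submodule.map_top,
      Submodule.range_subtype]
  · rintro ⟨hli, hsp⟩
    refine ⟨?_, ?_⟩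
    · have := hli.map' M.subtype (Submodule.ker_subtype M)
      rwa [hcomp] at this
    · have := congrArg (Submodule.map M.subtype) hsp
      rwa [Submodule.map_span, ← Set.range_comp, hcomp, Submodule.map_top,
        Submodule.range_subtype] at this

/-- Over a PID, if `B` is a flow-up class basis of `R_G` with leading terms `l i = B i i`
and `Q = ∏ i, l i`, then `C` is a basis of `R_G` iff `det [C₁,...,Cₙ] = u * Q` for a
unit `u`. -/
theorem stmt16 {R : Type*} [CommRing R] [IsDomain R] [IsPrincipalIdealRing R] {n : ℕ}
    (G : SimpleGraph (Fin n)) (lab : Fin n → Fin n → R)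
    (B : Fin n → Fin n → R) (hBmem : ∀ k, B k ∈ splineMod G lab)
    (hflow : ∀ i j, j < i → B i j = 0) (hlead : ∀ i, B i i ≠ 0)
    (hBind : LinearIndependent R B)
    (hBspan : Submodule.span R (Set.range B) = splineMod G lab)
    (C : Fin n → Fin n → R) (hC : ∀ k, C k ∈ splineMod G lab) :
    (LinearIndependent R C ∧ Submodule.span R (Set.range C) = splineMod G lab) ↔
      ∃ u : Rˣ, Matrix.det (Matrix.of fun i j => C j i) = (u : R) * ∏ i, B i i := by
  classical
  set M := splineMod G lab with hM
  set B' : Fin n → M := fun k => ⟨B k, hBmem k⟩ with hB'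
  set C' : Fin n → M := fun k => ⟨C k, hC k⟩ with hC'
  obtain ⟨hBind', hBspan'⟩ := (aux_basis_iff B hBmem).mp ⟨hBind, hBspan⟩
  let b : Module.Basis (Fin n) R M := Module.Basis.mk hBind' hBspan'.ge
  have hb : ∀ j, (b j : Fin n → R) = B j := fun j => by simp [b, Module.Basis.mk_apply]
  set A : Matrix (Fin n) (Fin n) R := b.toMatrix C' with hA
  have hrepr : ∀ k, C k = fun i => ∑ j, A j k * B j i := by
    intro k
    have := b.sum_repr (C' k)
    have := congrArg (Subtype.val) this
    funext i
    have h2 := congrFun this i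
    simp only [Submodule.coe_sum, Submodule.coe_smul, Finset.sum_apply, Pi.smul_apply,
      smul_eq_mul] at h2
    refine Eq.trans h2.symm ?_
    refine Finset.sum_congr rfl fun j _ => ?_
    rw [hA, Module.Basis.toMatrix_apply, hb]
  set MatB : Matrix (Fin n) (Fin n) R := Matrix.of fun i j => B j i with hMatB
  have hmul : Matrix.of (fun i j => C j i) = MatB * A := by
    ext i j
    rw [Matrix.mul_apply]
    simp only [Matrix.of_apply, hrepr j]
    rw [hMatB]
    exact Finset.sum_congr rfl fun k _ => by rw [Matrix.of_apply, mul_comm]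
  have hdetB : MatB.det = ∏ i, B i i := by
    rw [Matrix.det_of_lowerTriangular MatB (fun i j h => hflow j i (by exact_mod_cast h))]
    rfl
  have hQ : (∏ i, B i i) ≠ 0 := Finset.prod_ne_zero_iff.mpr fun i _ => hlead i
  have hdetC : Matrix.det (Matrix.of fun i j => C j i) = (∏ i, B i i) * A.det := by
    rw [hmul, Matrix.det_mul, hdetB]
  rw [aux_basis_iff C hC, Module.Basis.is_basis_iff_det b]
  have hbd : b.det C' = A.det := by rw [Module.Basis.det_apply]
  rw [show (fun k => (⟨C k, hC k⟩ : M)) = C' from rfl, hbd]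
  constructor
  · rintro ⟨u, hu⟩
    exact ⟨u, by rw [hdetC, ← hu, mul_comm]⟩
  · rintro ⟨u, hu⟩
    rw [hdetC, mul_comm ((u : R))] at hu
    exact ⟨u, (mul_left_cancel₀ hQ hu).symm⟩
end
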